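/- For the normalized shallow neural tangent kernel with one hidden layer (L=1), the limit as the bias β tends to infinity of k̈_NTK(x,z; 1, β) = (1/(β²+1))·Θ^{(1)}(x,z) equals 2 − arccos(λ^{(0)}(x,z))/π, where λ^{(0)}(x,z) = ⟨x,z⟩/(‖x‖‖z‖). -/

import Mathlib

/-! The numerator is affine in `β²` with leading coefficient `κ₀(λ) + 1`, so after division by
`β² + 1` only `κ₀(λ) + 1 = 2 - arccos λ / π` survives. -/

open Filter Topology

theorem tendsto_mul_add_div_add_one {α : Type*} {l : Filter α} {f : α → ℝ}
    (hf : Tendsto f l atTop) (a b : ℝ) :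
    Tendsto (fun t => (a * f t + b) / (f t + 1)) l (𝓝 a) := by
  have hf1 : Tendsto (fun t => f t + 1) l atTop := tendsto_atTop_add_const_right _ 1 hf
  have hrest : Tendsto (fun t => a + (b - a) / (f t + 1)) l (𝓝 a) := by
    simpa using tendsto_const_nhds.add (tendsto_const_nhds.div_atTop hf1)
  refine hrest.congr' ?_
  filter_upwards [hf1.eventually_gt_atTop 0] with t ht
  field_simp
  ring

theorem sqrt_real_inner_self_mul_real_inner_self {E : Type*} [NormedAddCommGroup E]
    [InnerProductSpace ℝ E] (x z : E) :
    √(inner ℝ x x * inner ℝ z z) = ‖x‖ * ‖z‖ := by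
  rw [real_inner_self_eq_norm_sq, real_inner_self_eq_norm_sq, ← mul_pow,
    Real.sqrt_sq (by positivity)]

theorem ntk_shallow_bias_limit_general {d : ℕ} (x z : EuclideanSpace ℝ (Fin d)) :
    let S0 : ℝ := (inner ℝ x z : ℝ)
    let lam : ℝ := S0 / Real.sqrt ((inner ℝ x x : ℝ) * (inner ℝ z z : ℝ))
    let k0 : ℝ := (1 / Real.pi) * (Real.pi - Real.arccos lam)
    let k1 : ℝ := (1 / Real.pi) *
      (lam * (Real.pi - Real.arccos lam) + Real.sqrt (1 - lam ^ 2))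
    Filter.Tendsto
      (fun β : ℝ =>
        ((S0 + β ^ 2) * k0 + k1 * Real.sqrt ((inner ℝ x x : ℝ) * (inner ℝ z z : ℝ))
            + β ^ 2) / (β ^ 2 + 1))
      Filter.atTop
      (nhds (2 - Real.arccos ((inner ℝ x z : ℝ) / (‖x‖ * ‖z‖)) / Real.pi)) := by
  intro S0 lam k0 k1
  have hk0 : k0 + 1 = 2 - Real.arccos ((inner ℝ x z : ℝ) / (‖x‖ * ‖z‖)) / Real.pi := by
    simp only [k0, lam, S0, sqrt_real_inner_self_mul_real_inner_self]
    field_simp [Real.pi_ne_zero]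
    ring
  rw [← hk0]
  convert tendsto_mul_add_div_add_one (tendsto_pow_atTop two_ne_zero) (k0 + 1)
    (S0 * k0 + k1 * √(inner ℝ x x * inner ℝ z z)) using 2
  ring

/-- Limit of the normalized shallow NTK (one hidden layer) as the bias `β → ∞`:
`k̈_NTK(x,z;1,β) = Θ⁽¹⁾(x,z)/(β²+1)` tends to `2 - arccos(λ⁽⁰⁾)/π`. -/
theorem ntk_shallow_bias_limit {d : ℕ} (x z : EuclideanSpace ℝ (Fin d))
    (hx : x ≠ 0) (hz : z ≠ 0) :
    let S0 : ℝ := (inner ℝ x z : ℝ)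
    let lam : ℝ := S0 / Real.sqrt ((inner ℝ x x : ℝ) * (inner ℝ z z : ℝ))
    let k0 : ℝ := (1 / Real.pi) * (Real.pi - Real.arccos lam)
    let k1 : ℝ := (1 / Real.pi) *
      (lam * (Real.pi - Real.arccos lam) + Real.sqrt (1 - lam ^ 2))
    Filter.Tendsto
      (fun β : ℝ =>
        ((S0 + β ^ 2) * k0 + k1 * Real.sqrt ((inner ℝ x x : ℝ) * (inner ℝ z z : ℝ))
            + β ^ 2) / (β ^ 2 + 1))
      Filter.atTop
      (nhds (2 - Real.arccos ((inner ℝ x z : ℝ) / (‖x‖ * ‖z‖)) / Real.pi)) :=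
  ntk_shallow_bias_limit_general x z
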